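/- For every i ∈ H′, one has ρ_{i+1} < bar-α_{i+1} ≤ 1, i.e. bar-α_{i+1} ∈ (ρ_{i+1}, 1]. -/
import Mathlib


open Finset

/-- `rhoProd ρ k j = ∏_{i=k+1}^{j} ρ i`. -/
noncomputable def rhoProd (ρ : ℕ → ℝ) (k j : ℕ) : ℝ := ∏ i ∈ Finset.Icc (k + 1) j, ρ i

/-- `k` is a binding index: `k ∈ {κ+1, …, n-1}` and `ρ_{k,j} < 1` for all `j ∈ {k+1, …, n-1}`. -/
def Binding (ρ : ℕ → ℝ) (n κ k : ℕ) : Prop :=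
  κ + 1 ≤ k ∧ k ≤ n - 1 ∧ ∀ j, k + 1 ≤ j → j ≤ n - 1 → rhoProd ρ k j < 1

/-- `kmin ρ n κ i = min {k ∈ H : k ≥ i}`, the smallest binding index `≥ i`. -/
noncomputable def kmin (ρ : ℕ → ℝ) (n κ i : ℕ) : ℕ :=
  sInf {k | Binding ρ n κ k ∧ i ≤ k}

/-- `bar-α_i`: equals `α i` for `i ≤ κ` and `(ρ_{i, k(i)})⁻¹` for `i > κ`. -/
noncomputable def barAlpha (ρ α : ℕ → ℝ) (n κ i : ℕ) : ℝ :=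
  if i ≤ κ then α i else (rhoProd ρ i (kmin ρ n κ i))⁻¹

/-- `H′ = (H ∪ {κ}) \ {n-1}`. -/
def Hprime (ρ : ℕ → ℝ) (n κ k : ℕ) : Prop :=
  (Binding ρ n κ k ∨ k = κ) ∧ k ≠ n - 1

lemma rhoProd_self (ρ : ℕ → ℝ) (k : ℕ) : rhoProd ρ k k = 1 := by
  simp [rhoProd]

lemma rhoProd_mul (ρ : ℕ → ℝ) {a b c : ℕ} (hab : a ≤ b) (hbc : b ≤ c) :
    rhoProd ρ a b * rhoProd ρ b c = rhoProd ρ a c := by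
  unfold rhoProd
  rw [Finset.Icc_add_one_left_eq_Ioc, Finset.Icc_add_one_left_eq_Ioc, Finset.Icc_add_one_left_eq_Ioc]
  exact Finset.prod_Ioc_consecutive ρ hab hbc

lemma rhoProd_pos {n : ℕ} {ρ : ℕ → ℝ} (hρ : ∀ i, 1 ≤ i → i ≤ n → 0 < ρ i)
    {k j : ℕ} (hj : j ≤ n) : 0 < rhoProd ρ k j := by
  apply Finset.prod_pos
  intro i hi
  rw [Finset.mem_Icc] at hi
  exact hρ i (by omega) (by omega)

/-- There is a binding index `m ≥ i'` maximizing `rhoProd ρ i' ·`, and the minimal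
binding index `k ≥ i'` satisfies `1 ≤ rhoProd ρ i' k`. -/
lemma kmin_spec {n κ i' : ℕ} {ρ : ℕ → ℝ} (hρ : ∀ i, 1 ≤ i → i ≤ n → 0 < ρ i)
    (hκ : κ + 1 ≤ i') (hle : i' ≤ n - 1) (hn : 2 ≤ n) :
    Binding ρ n κ (kmin ρ n κ i') ∧ i' ≤ kmin ρ n κ i' ∧
      1 ≤ rhoProd ρ i' (kmin ρ n κ i') := by
  classical
  set s : Finset ℕ := Finset.Icc i' (n - 1) with hs
  set f : ℕ → ℝ := fun j => rhoProd ρ i' j with hf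
  have hi's : i' ∈ s := by simp [hs, hle]
  obtain ⟨b, hb, hbmax⟩ := Finset.exists_max_image s f ⟨i', hi's⟩
  set T : Finset ℕ := s.filter (fun j => ∀ l ∈ s, f l ≤ f j) with hT
  have hTne : T.Nonempty := ⟨b, by simp [hT, hb]; exact hbmax⟩
  set m : ℕ := T.max' hTne with hm
  have hmT : m ∈ T := T.max'_mem hTne
  rw [hT, Finset.mem_filter] at hmT
  obtain ⟨hms, hmmax⟩ := hmT
  rw [hs, Finset.mem_Icc] at hms
  -- strict maximality to the right
  have hstrict : ∀ j, m + 1 ≤ j → j ≤ n - 1 → f j < f m := by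
    intro j hj1 hj2
    have hjs : j ∈ s := by simp [hs]; omega
    have hle' : f j ≤ f m := hmmax j hjs
    rcases lt_or_eq_of_le hle' with h | h
    · exact h
    · exfalso
      have hjT : j ∈ T := by
        rw [hT, Finset.mem_filter]
        exact ⟨hjs, fun l hl => h ▸ hmmax l hl⟩
      have := T.le_max' j hjT
      omega
  have hfm_pos : 0 < f m := rhoProd_pos hρ (by omega)
  have hBm : Binding ρ n κ m := by
    refine ⟨by omega, hms.2, ?_⟩
    intro j hj1 hj2
    have h1 : f m * rhoProd ρ m j = f j := rhoProd_mul ρ hms.1 (by omega)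
    have h2 : f j < f m := hstrict j hj1 hj2
    nlinarith [rhoProd_pos (k := m) (j := j) hρ (by omega : j ≤ n)]
  have hfm1 : 1 ≤ f m := by
    have := hmmax i' hi's
    simpa [hf, rhoProd_self] using this
  have hSne : {k | Binding ρ n κ k ∧ i' ≤ k}.Nonempty := ⟨m, hBm, hms.1⟩
  have hkmem := Nat.sInf_mem hSne
  set k : ℕ := kmin ρ n κ i' with hk
  have hkmem' : Binding ρ n κ k ∧ i' ≤ k := hkmem
  have hkm : k ≤ m := Nat.sInf_le ⟨hBm, hms.1⟩
  refine ⟨hkmem'.1, hkmem'.2, ?_⟩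
  rcases eq_or_lt_of_le hkm with h | h
  · rw [h]; exact hfm1
  · have h1 : rhoProd ρ i' k * rhoProd ρ k m = f m := rhoProd_mul ρ hkmem'.2 (by omega)
    have h2 : rhoProd ρ k m < 1 := hkmem'.1.2.2 m (by omega) hms.2
    have h3 : 0 < rhoProd ρ i' k := rhoProd_pos hρ (by omega)
    nlinarith

theorem stmt8 (n : ℕ) (hn : 2 ≤ n) (ρ α : ℕ → ℝ)
    (hρ : ∀ i, 1 ≤ i → i ≤ n → 0 < ρ i)
    (hα0pos : 0 < α 0) (hα0le : α 0 ≤ 1)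
    (hrec : ∀ k, 1 ≤ k → k ≤ n → α k = min (α (k - 1) * ρ k) 1)
    (κ : ℕ) (hκle : κ ≤ n - 1) (hκ1 : α κ = 1)
    (hκmax : ∀ k, k ≤ n - 1 → α k = 1 → k ≤ κ) :
    ∀ i, Hprime ρ n κ i →
      ρ (i + 1) < barAlpha ρ α n κ (i + 1) ∧ barAlpha ρ α n κ (i + 1) ≤ 1 := by
  -- α is bounded by 1
  have hαle1 : ∀ k, k ≤ n → α k ≤ 1 := by
    intro k hk
    rcases Nat.eq_zero_or_pos k with h | h
    · rw [h]; exact hα0le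
    · rw [hrec k h hk]; exact min_le_right _ _
  -- lower bound for α in terms of products
  have hαlow : ∀ j, κ ≤ j → j ≤ n - 1 → min (rhoProd ρ κ j) 1 ≤ α j := by
    intro j hj
    induction j with
    | zero =>
      intro _
      have h0 : κ = 0 := by omega
      subst h0
      rw [rhoProd_self, hκ1]
      simp
    | succ j ih =>
      intro hj1
      rcases Nat.lt_or_ge κ (j + 1) with hlt | hge
      · -- κ ≤ j
        have hκj : κ ≤ j := by omega
        have hIH : min (rhoProd ρ κ j) 1 ≤ α j := ih hκj (by omega)
        have hρpos : 0 < ρ (j + 1) := hρ (j + 1) (by omega) (by omega)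
        have hrw : α (j + 1) = min (α j * ρ (j + 1)) 1 := by
          have := hrec (j + 1) (by omega) (by omega)
          simpa using this
        have hprod : rhoProd ρ κ (j + 1) = rhoProd ρ κ j * ρ (j + 1) := by
          rw [← rhoProd_mul ρ hκj (Nat.le_succ j)]
          congr 1
          simp [rhoProd]
        rcases le_or_gt (rhoProd ρ κ j) 1 with h1 | h1
        · have h2 : rhoProd ρ κ j ≤ α j := by
            rwa [min_eq_left h1] at hIH
          have h3 : rhoProd ρ κ (j + 1) ≤ α j * ρ (j + 1) := by
            rw [hprod]
            exact mul_le_mul_of_nonneg_right h2 hρpos.le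
          rw [hrw]
          exact min_le_min h3 le_rfl
        · -- then α j = 1 and j = κ, contradiction with rhoProd κ κ = 1
          exfalso
          have h2 : (1 : ℝ) ≤ α j := by rwa [min_eq_right h1.le] at hIH
          have h3 : α j = 1 := le_antisymm (hαle1 j (by omega)) h2
          have h4 : j ≤ κ := hκmax j (by omega) h3
          have h5 : j = κ := by omega
          rw [h5, rhoProd_self] at h1
          exact lt_irrefl 1 h1
      · -- κ = j + 1
        have hκeq : κ = j + 1 := by omega
        have hα : α (j + 1) = 1 := by rw [← hκeq]; exact hκ1
        rw [hκeq, rhoProd_self, hα]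
        simp
  intro i hi
  obtain ⟨hiH, hine⟩ := hi
  have hκi : κ ≤ i := by
    rcases hiH with hB | hEq
    · have := hB.1; omega
    · omega
  have hi1 : i + 1 ≤ n - 1 := by
    rcases hiH with hB | hEq
    · have := hB.2.1; omega
    · omega
  obtain ⟨hBk, hik, h1k⟩ := kmin_spec (n := n) (κ := κ) (i' := i + 1) hρ (by omega) hi1 hn
  set k : ℕ := kmin ρ n κ (i + 1) with hk
  have hkn : k ≤ n - 1 := hBk.2.1
  have hPpos : 0 < rhoProd ρ (i + 1) k := rhoProd_pos (n := n) (k := i + 1) (j := k) hρ (by omega)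
  have hbar : barAlpha ρ α n κ (i + 1) = (rhoProd ρ (i + 1) k)⁻¹ := by
    rw [barAlpha, if_neg (by omega)]
  -- key: rhoProd ρ i k < 1
  have hkey : rhoProd ρ i k < 1 := by
    rcases hiH with hB | hEq
    · exact hB.2.2 k (by omega) hkn
    · subst hEq
      have hmin : min (rhoProd ρ i k) 1 ≤ α k := hαlow k (by omega) hkn
      have hne1 : α k ≠ 1 := by
        intro h
        have := hκmax k hkn h
        have := hBk.1
        omega
      have hlt1 : α k < 1 := lt_of_le_of_ne (hαle1 k (by omega)) hne1
      by_contra h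
      push_neg at h
      rw [min_eq_right h] at hmin
      linarith
  have hsplit : ρ (i + 1) * rhoProd ρ (i + 1) k = rhoProd ρ i k := by
    rw [← rhoProd_mul ρ (Nat.le_succ i) hik]
    congr 1
    simp [rhoProd]
  rw [hbar]
  constructor
  · rw [← one_div, lt_div_iff₀ hPpos, hsplit]
    exact hkey
  · rw [← one_div, div_le_one hPpos]
    exact h1k
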